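/- arXiv:2007.04605 — 3 statements merged into one kernel-verified Lean document; each statement's English description precedes it below -/
import Mathlib

section
/- Let r > 0, let C ⊂ ℝ^d be a bounded r-prox-regular set, and let 𝒞 = {ρ ∈ P₂(ℝ^d) : supp ρ ⊂ C}. Let θ ∈ P₂(ℝ^d) satisfy supp θ ⊂ C + r·B°, where B° is the open unit ball. Then there exists θ_C ∈ 𝒞 such that W₂(θ, θ_C) = inf_{ρ∈𝒞} W₂(θ, ρ); moreover θ_C is unique and is given by θ_C = (P_C)♯θ, the pushforward of θ by the metric projection P_C onto C. -/
open MeasureTheory Filter Metric Set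
open scoped Topology ENNReal NNReal RealInnerProductSpace

noncomputable section

abbrev Rd (d : ℕ) := EuclideanSpace ℝ (Fin d)

namespace MSP

variable {d : ℕ}

/-- The topological support of a measure. -/
def msupport {α : Type*} [TopologicalSpace α] {mα : MeasurableSpace α} (μ : Measure α) :
    Set α :=
  {x | ∀ U : Set α, IsOpen U → x ∈ U → 0 < μ U}

/-- `π` is a transport plan (coupling) between `μ` and `ν`. -/
def IsCoupling (π : Measure (Rd d × Rd d)) (μ ν : Measure (Rd d)) : Prop :=
  π.map Prod.fst = μ ∧ π.map Prod.snd = ν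

/-- The quadratic transport cost of a plan. -/
def cost2 (π : Measure (Rd d × Rd d)) : ℝ≥0∞ :=
  ∫⁻ p, (‖p.1 - p.2‖₊ : ℝ≥0∞) ^ 2 ∂π

/-- The squared quadratic Wasserstein distance (as an extended real). -/
def W2sq (μ ν : Measure (Rd d)) : ℝ≥0∞ :=
  sInf {c | ∃ π : Measure (Rd d × Rd d), IsCoupling π μ ν ∧ c = cost2 π}

/-- The quadratic Wasserstein distance. -/
def W2 (μ ν : Measure (Rd d)) : ℝ :=
  Real.sqrt (W2sq μ ν).toReal

/-- An optimal transport plan for the quadratic cost. -/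
def IsOptimalPlan (π : Measure (Rd d × Rd d)) (μ ν : Measure (Rd d)) : Prop :=
  IsCoupling π μ ν ∧ cost2 π = W2sq μ ν

def HasFiniteSecondMoment (μ : Measure (Rd d)) : Prop :=
  ∫⁻ x, (‖x‖₊ : ℝ≥0∞) ^ 2 ∂μ < ⊤

/-- `μ` belongs to the Wasserstein space `P₂(ℝ^d)`. -/
def IsP2 (μ : Measure (Rd d)) : Prop :=
  IsProbabilityMeasure μ ∧ HasFiniteSecondMoment μ

/-- The set of nearest points of `S` to `x` (metric projection set). -/
def projSet {E : Type*} [MetricSpace E] (S : Set E) (x : E) : Set E :=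
  {a | a ∈ S ∧ dist x a = infDist x S}

/-- `S` is `r`-prox-regular: the metric projection onto `S` is single-valued and
continuous on the open `r`-neighborhood of `S`. -/
def IsProxRegular {E : Type*} [MetricSpace E] (r : ℝ) (S : Set E) : Prop :=
  IsClosed S ∧ ∃ P : E → E,
    (∀ x, infDist x S < r → projSet S x = {P x}) ∧
    ContinuousOn P {x | infDist x S < r}

/-- The proximal normal cone to `S` at `x`. -/
def proxNormalCone {E : Type*} [NormedAddCommGroup E] [InnerProductSpace ℝ E]
    (S : Set E) (x : E) : Set E :=
  {v | ∃ σ : ℝ, 0 ≤ σ ∧ ∀ y ∈ S, ⟪v, y - x⟫ ≤ σ * ‖y - x‖ ^ 2}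

/-- Assumption (A₁) on the nonlocal vector field `𝒱`. -/
def A1 (L : ℝ) (V : Measure (Rd d) → Rd d → Rd d) : Prop :=
  (∀ μ ν : Measure (Rd d), IsP2 μ → IsP2 ν → ∀ x, ‖V μ x - V ν x‖ ≤ L * W2 μ ν) ∧
  (∀ μ : Measure (Rd d), IsP2 μ → ∀ x y, ‖V μ x - V μ y‖ ≤ L * ‖x - y‖) ∧
  (∀ μ : Measure (Rd d), IsP2 μ → ∀ x, ‖V μ x‖ ≤ L) ∧
  (∀ μ : Measure (Rd d), IsP2 μ → Continuous (V μ))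

/-- Assumption (A₂) on the moving viability set `𝐂`. -/
def A2 (T M r : ℝ) (C : ℝ → Set (Rd d)) : Prop :=
  (∀ s ∈ Icc (0:ℝ) T, ∀ t ∈ Icc (0:ℝ) T, hausdorffDist (C s) (C t) ≤ M * |s - t|) ∧
  ∀ t ∈ Icc (0:ℝ) T, IsCompact (C t) ∧ (C t).Nonempty ∧ IsProxRegular r (C t)

/-- `(ρ, v)` solves the continuity equation `∂ₜρ + ∇·(vρ) = 0` on `(0,T)×ℝ^d` in
the sense of distributions. -/
def IsContEqSol (T : ℝ) (ρ : ℝ → Measure (Rd d)) (v : ℝ → Rd d → Rd d) : Prop :=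
  ∀ φ : ℝ → Rd d → ℝ,
    ContDiff ℝ ((⊤ : ℕ∞) : WithTop ℕ∞) (fun p : ℝ × Rd d => φ p.1 p.2) →
    HasCompactSupport (fun p : ℝ × Rd d => φ p.1 p.2) →
    tsupport (fun p : ℝ × Rd d => φ p.1 p.2) ⊆ Ioo (0:ℝ) T ×ˢ (univ : Set (Rd d)) →
    ∫ t in Ioo (0:ℝ) T,
      ∫ x, (deriv (fun s => φ s x) t + ⟪v t x, gradient (φ t) x⟫) ∂(ρ t) = 0

/-- `ρ` is an absolutely continuous curve in `P₂(ℝ^d)` on `[0,T]`. -/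
def IsAbsCont (T : ℝ) (ρ : ℝ → Measure (Rd d)) : Prop :=
  ∃ g : ℝ → ℝ, IntegrableOn g (Icc (0:ℝ) T) ∧
    ∀ s t : ℝ, 0 ≤ s → s ≤ t → t ≤ T → W2 (ρ s) (ρ t) ≤ ∫ τ in Ioc s t, g τ

/-- `ρ` (with Borel velocity field `v`) is a solution of the measure sweeping
process driven by `𝐂` with perturbation `𝒱`. -/
def IsMSPSol (T : ℝ) (V : Measure (Rd d) → Rd d → Rd d) (C : ℝ → Set (Rd d))
    (ρ : ℝ → Measure (Rd d)) (v : ℝ → Rd d → Rd d) : Prop :=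
  (∀ t ∈ Icc (0:ℝ) T, IsP2 (ρ t)) ∧
  IsAbsCont T ρ ∧
  Measurable (fun p : ℝ × Rd d => v p.1 p.2) ∧
  IsContEqSol T ρ v ∧
  (∀ᵐ t ∂(volume.restrict (Icc (0:ℝ) T)),
    ∀ᵐ x ∂(ρ t), V (ρ t) x - v t x ∈ proxNormalCone (C t) x) ∧
  ∀ t ∈ Icc (0:ℝ) T, msupport (ρ t) ⊆ C t

/-- The graph of the set-valued map `𝐂`, as a subset of the euclidean product
`ℝ ×₂ ℝ^d`. -/
def graphSet (T : ℝ) (C : ℝ → Set (Rd d)) : Set (WithLp 2 (ℝ × Rd d)) :=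
  {p | (WithLp.equiv 2 (ℝ × Rd d) p).1 ∈ Icc (0:ℝ) T ∧
       (WithLp.equiv 2 (ℝ × Rd d) p).2 ∈ C ((WithLp.equiv 2 (ℝ × Rd d) p).1)}

/-- Continuity of a curve of measures with respect to `W₂`, on `[0,T]`. -/
def W2ContinuousOn (T : ℝ) (ρ : ℝ → Measure (Rd d)) : Prop :=
  ∀ t₀ ∈ Icc (0:ℝ) T, ∀ ε > (0:ℝ), ∃ δ > (0:ℝ),
    ∀ t ∈ Icc (0:ℝ) T, |t - t₀| < δ → W2 (ρ t) (ρ t₀) < ε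

end MSP

open MSP

/-!
Every coupling of `θ` with a measure carried by `C` costs at least `∫ d_C² dθ`, and the coupling
`(id, P)♯θ` attains this bound, so `P♯θ` is a minimizer. If `μ` is another minimizer, take
near-optimal couplings `π` of `θ` and `μ`. By Markov's inequality the excess cost
`|x - y|² - d_C(x)²` is small in `π`-probability, and on a compact part of the `r`-neighbourhood
of `C` compactness and uniqueness of nearest points turn a small excess cost into `y` being close
to `P x`. So `μ` and `P♯θ` are laws of random variables that are arbitrarily close in
probability, and their Lévy–Prokhorov distance vanishes.
-/

namespace MeasureTheory

variable {α β : Type*} [PseudoMetricSpace α] [MeasurableSpace α] [MeasurableSpace β]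

theorem levyProkhorovEDist_map_le_of_measure_le_dist_le [OpensMeasurableSpace α]
    {π : Measure β} [IsProbabilityMeasure π] {X Y : β → α}
    (hX : AEMeasurable X π) (hY : AEMeasurable Y π) {η : ℝ}
    (h : π {b | η ≤ dist (X b) (Y b)} ≤ ENNReal.ofReal η) :
    levyProkhorovEDist (π.map X) (π.map Y) ≤ ENNReal.ofReal η := by
  have := Measure.isProbabilityMeasure_map hX
  have := Measure.isProbabilityMeasure_map hY
  refine levyProkhorovEDist_le_of_forall_le _ _ _ fun ε B hηε hε hB => ?_
  have hηε' : η < ε.toReal := (le_max_left η 0).trans_lt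
    ((ENNReal.toReal_ofReal' (r := η)) ▸ ENNReal.toReal_strict_mono hε.ne hηε)
  have hsub : X ⁻¹' B ⊆ Y ⁻¹' thickening ε.toReal B ∪ {b | η ≤ dist (X b) (Y b)} := by
    intro b hb
    by_cases hd : η ≤ dist (X b) (Y b)
    · exact Or.inr hd
    · exact Or.inl (mem_thickening_iff.mpr ⟨X b, hb, by rw [dist_comm]; linarith [not_le.mp hd]⟩)
  calc π.map X B = π (X ⁻¹' B) := Measure.map_apply_of_aemeasurable hX hB
    _ ≤ π (Y ⁻¹' thickening ε.toReal B) + π {b | η ≤ dist (X b) (Y b)} :=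
      (measure_mono hsub).trans (measure_union_le _ _)
    _ ≤ π.map Y (thickening ε.toReal B) + ε := by
      rw [Measure.map_apply_of_aemeasurable hY isOpen_thickening.measurableSet]
      gcongr; exact h.trans hηε.le

theorem Measure.eq_of_levyProkhorovEDist_eq_zero [BorelSpace α] {μ ν : Measure α}
    [IsFiniteMeasure μ] [IsFiniteMeasure ν] (h : levyProkhorovEDist μ ν = 0) : μ = ν := by
  have hclosed {s : Set α} (hs : IsClosed s) : μ s = ν s :=
    measure_eq_measure_of_levyProkhorovEDist_eq_zero_of_isClosed h hs
      ⟨1, one_pos, measure_ne_top _ _⟩ ⟨1, one_pos, measure_ne_top _ _⟩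
  refine ext_of_generate_finite _ ?_ isPiSystem_isClosed (fun s hs => hclosed hs)
    (hclosed isClosed_univ)
  rw [BorelSpace.measurable_eq (α := α), borel_eq_generateFrom_isClosed]

theorem eq_of_forall_exists_measure_le_dist_le [BorelSpace α] {μ ν : Measure α}
    [IsFiniteMeasure μ] [IsFiniteMeasure ν] {X Y : β → α}
    (h : ∀ η > 0, ∃ π : Measure β, IsProbabilityMeasure π ∧ AEMeasurable X π ∧
      AEMeasurable Y π ∧ π.map X = μ ∧ π.map Y = ν ∧
      π {b | η ≤ dist (X b) (Y b)} ≤ ENNReal.ofReal η) :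
    μ = ν := by
  refine Measure.eq_of_levyProkhorovEDist_eq_zero (le_antisymm ?_ zero_le)
  refine ENNReal.le_of_forall_pos_le_add fun η hη _ => ?_
  obtain ⟨π, hπ, hX, hY, rfl, rfl, hπη⟩ := h η hη
  simpa using levyProkhorovEDist_map_le_of_measure_le_dist_le hX hY hπη

end MeasureTheory

theorem IsCompact.exists_pos_forall_lt_imp_lt {γ : Type*} [TopologicalSpace γ] {s : Set γ}
    (hs : IsCompact s) {F g : γ → ℝ} (hF : ContinuousOn F s) (hg : ContinuousOn g s) {δ : ℝ}
    (hpos : ∀ p ∈ s, δ ≤ g p → 0 < F p) : ∃ ε > 0, ∀ p ∈ s, F p < ε → g p < δ := by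
  set Z := s ∩ g ⁻¹' Ici δ
  have hZ : IsCompact Z := hg.upperSemicontinuousOn.isCompact_inter_preimage_Ici hs δ
  rcases Z.eq_empty_or_nonempty with hZe | hZne
  · refine ⟨1, one_pos, fun p hp _ => not_le.mp fun hδ => ?_⟩
    exact (hZe ▸ (⟨hp, hδ⟩ : p ∈ Z) : p ∈ (∅ : Set γ))
  · obtain ⟨p₀, hp₀, hmin⟩ := hZ.exists_isMinOn hZne (hF.mono inter_subset_left)
    exact ⟨F p₀, hpos p₀ hp₀.1 hp₀.2, fun p hp hFp => not_le.mp fun hδ =>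
      (hmin ⟨hp, hδ⟩ : F p₀ ≤ F p).not_gt hFp⟩

namespace MSP

section Support

variable {α : Type*} [TopologicalSpace α] {mα : MeasurableSpace α} {μ : Measure α} {s : Set α}

theorem msupport_eq_support (μ : Measure α) : msupport μ = μ.support := by
  rw [Measure.support_eq_forall_isOpen]
  ext x
  exact forall_congr' fun U => imp.swap

theorem ae_mem_of_msupport_subset [HereditarilyLindelofSpace α] (h : msupport μ ⊆ s) :
    ∀ᵐ x ∂μ, x ∈ s :=
  mem_of_superset μ.support_mem_ae (msupport_eq_support μ ▸ h)

theorem msupport_subset_of_ae_mem (hs : IsClosed s) (h : ∀ᵐ x ∂μ, x ∈ s) :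
    msupport μ ⊆ s :=
  msupport_eq_support μ ▸ μ.support_subset_of_isClosed hs h

end Support

theorem infDist_lt_dist_of_projSet_eq_singleton {E : Type*} [MetricSpace E] {S : Set E}
    {x p y : E} (hp : projSet S x = {p}) (hy : y ∈ S) (hyp : y ≠ p) : infDist x S < dist x y :=
  (infDist_le_dist_of_mem hy).lt_of_ne fun h => hyp (hp ▸ ⟨hy, h.symm⟩ : y ∈ ({p} : Set E))

theorem exists_pos_forall_dist_sq_sub_infDist_sq_lt {E : Type*} [MetricSpace E]
    {K C : Set E} (hK : IsCompact K) (hC : IsCompact C) {P : E → E}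
    (hP : ∀ x ∈ K, projSet C x = {P x}) (hPc : ContinuousOn P K) {δ : ℝ} (hδ : 0 < δ) :
    ∃ ε > 0, ∀ x ∈ K, ∀ y ∈ C, dist x y ^ 2 - infDist x C ^ 2 < ε → dist y (P x) < δ := by
  have hF : Continuous fun p : E × E => dist p.1 p.2 ^ 2 - infDist p.1 C ^ 2 :=
    (continuous_dist.pow 2).sub (((continuous_infDist_pt C).comp continuous_fst).pow 2)
  have hg : ContinuousOn (fun p : E × E => dist p.2 (P p.1)) (K ×ˢ C) :=
    continuous_dist.comp_continuousOn
      (continuous_snd.continuousOn.prodMk (hPc.comp continuous_fst.continuousOn fun _ hp => hp.1))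
  obtain ⟨ε, hε, h⟩ := (hK.prod hC).exists_pos_forall_lt_imp_lt hF.continuousOn hg
    (δ := δ) fun ⟨x, y⟩ ⟨hx, hy⟩ hδy => by
      have hne : y ≠ P x := by rintro rfl; simp only [dist_self] at hδy; linarith
      exact sub_pos.mpr (pow_lt_pow_left₀
        (infDist_lt_dist_of_projSet_eq_singleton (hP x hx) hy hne) infDist_nonneg two_ne_zero)
  exact ⟨ε, hε, fun x hx y hy => h (x, y) ⟨hx, hy⟩⟩

variable {d : ℕ}

theorem cost2_eq_lintegral_dist_sq (π : Measure (Rd d × Rd d)) :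
    cost2 π = ∫⁻ p, ENNReal.ofReal (dist p.1 p.2 ^ 2) ∂π := by
  refine lintegral_congr fun p => ?_
  rw [dist_eq_norm, ENNReal.ofReal_pow (norm_nonneg _), ofReal_norm, enorm_eq_nnnorm]

theorem isCoupling_prod (μ ν : Measure (Rd d)) [IsProbabilityMeasure μ]
    [IsProbabilityMeasure ν] : IsCoupling (μ.prod ν) μ ν :=
  ⟨by simp, by simp⟩

theorem isCoupling_map_prodMk {μ : Measure (Rd d)} {P : Rd d → Rd d} (hP : AEMeasurable P μ) :
    IsCoupling (μ.map fun x => (x, P x)) μ (μ.map P) := by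
  have hpair : AEMeasurable (fun x => (x, P x)) μ := aemeasurable_id.prodMk hP
  refine ⟨?_, ?_⟩
  · rw [AEMeasurable.map_map_of_aemeasurable measurable_fst.aemeasurable hpair]
    exact Measure.map_id
  · rw [AEMeasurable.map_map_of_aemeasurable measurable_snd.aemeasurable hpair]
    rfl

theorem W2sq_le_cost2 {π : Measure (Rd d × Rd d)} {μ ν : Measure (Rd d)}
    (h : IsCoupling π μ ν) : W2sq μ ν ≤ cost2 π :=
  sInf_le ⟨π, h, rfl⟩

theorem exists_isCoupling_cost2_lt {μ ν : Measure (Rd d)} {c : ℝ≥0∞} (h : W2sq μ ν < c) :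
    ∃ π, IsCoupling π μ ν ∧ cost2 π < c := by
  obtain ⟨_, ⟨π, hπ, rfl⟩, hlt⟩ := sInf_lt_iff.mp h
  exact ⟨π, hπ, hlt⟩

namespace IsCoupling

variable {π : Measure (Rd d × Rd d)} {μ ν : Measure (Rd d)}

theorem isProbabilityMeasure [IsProbabilityMeasure μ] (h : IsCoupling π μ ν) :
    IsProbabilityMeasure π := by
  have huniv := Measure.map_apply (μ := π) measurable_fst MeasurableSet.univ
  rw [h.1, preimage_univ, measure_univ] at huniv
  exact ⟨huniv.symm⟩

theorem ae_fst (h : IsCoupling π μ ν) {q : Rd d → Prop} (hq : ∀ᵐ x ∂μ, q x) :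
    ∀ᵐ p ∂π, q p.1 :=
  ae_of_ae_map measurable_fst.aemeasurable (h.1.symm ▸ hq)

theorem ae_snd (h : IsCoupling π μ ν) {q : Rd d → Prop} (hq : ∀ᵐ y ∂ν, q y) :
    ∀ᵐ p ∂π, q p.2 :=
  ae_of_ae_map measurable_snd.aemeasurable (h.2.symm ▸ hq)

theorem lintegral_fst (h : IsCoupling π μ ν) {f : Rd d → ℝ≥0∞} (hf : Measurable f) :
    ∫⁻ p, f p.1 ∂π = ∫⁻ x, f x ∂μ := by
  rw [← h.1, lintegral_map hf measurable_fst]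

theorem lintegral_snd (h : IsCoupling π μ ν) {f : Rd d → ℝ≥0∞} (hf : Measurable f) :
    ∫⁻ p, f p.2 ∂π = ∫⁻ y, f y ∂ν := by
  rw [← h.2, lintegral_map hf measurable_snd]

end IsCoupling

theorem W2sq_ne_top {μ ν : Measure (Rd d)} (hμ : IsP2 μ) (hν : IsP2 ν) : W2sq μ ν ≠ ⊤ := by
  have := hμ.1
  have := hν.1
  have hsq : Measurable fun x : Rd d => (‖x‖₊ : ℝ≥0∞) ^ 2 := by fun_prop
  have hcost : cost2 (μ.prod ν) ≤
      2 * (∫⁻ x, (‖x‖₊ : ℝ≥0∞) ^ 2 ∂μ + ∫⁻ y, (‖y‖₊ : ℝ≥0∞) ^ 2 ∂ν) := by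
    calc cost2 (μ.prod ν)
        ≤ ∫⁻ p, 2 * ((‖p.1‖₊ : ℝ≥0∞) ^ 2 + (‖p.2‖₊ : ℝ≥0∞) ^ 2) ∂(μ.prod ν) :=
          lintegral_mono fun p => by
            have h := ENNReal.coe_le_coe.mpr
              ((pow_le_pow_left₀ zero_le (nnnorm_sub_le p.1 p.2) 2).trans add_sq_le)
            push_cast at h
            exact h
      _ = _ := by
          rw [lintegral_const_mul _ (by fun_prop), lintegral_add_left (by fun_prop),
            (isCoupling_prod μ ν).lintegral_fst hsq, (isCoupling_prod μ ν).lintegral_snd hsq]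
  refine ne_top_of_le_ne_top ?_ ((W2sq_le_cost2 (isCoupling_prod μ ν)).trans hcost)
  exact ENNReal.mul_ne_top ENNReal.ofNat_ne_top (ENNReal.add_ne_top.mpr ⟨hμ.2.ne, hν.2.ne⟩)

theorem isP2_of_ae_mem_of_isBounded {μ : Measure (Rd d)} [IsProbabilityMeasure μ]
    {S : Set (Rd d)} (hS : Bornology.IsBounded S) (h : ∀ᵐ x ∂μ, x ∈ S) : IsP2 μ := by
  obtain ⟨R, hR⟩ := hS.subset_closedBall 0
  refine ⟨‹_›, ?_⟩
  calc ∫⁻ x, (‖x‖₊ : ℝ≥0∞) ^ 2 ∂μ ≤ ∫⁻ _, ENNReal.ofReal R ^ 2 ∂μ := by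
        refine lintegral_mono_ae (h.mono fun x hx => ?_)
        gcongr
        rw [← enorm_eq_nnnorm, ← ofReal_norm]
        exact ENNReal.ofReal_le_ofReal (mem_closedBall_zero_iff.mp (hR hx))
    _ < ⊤ := by simp

theorem W2_le_W2_of_W2sq_le {μ ν μ' ν' : Measure (Rd d)} (h : W2sq μ ν ≤ W2sq μ' ν')
    (h' : W2sq μ' ν' ≠ ⊤) : W2 μ ν ≤ W2 μ' ν' :=
  Real.sqrt_le_sqrt (ENNReal.toReal_mono h' h)

theorem W2sq_eq_of_W2_eq {μ ν μ' ν' : Measure (Rd d)} (h : W2 μ ν = W2 μ' ν')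
    (hfin : W2sq μ ν ≠ ⊤) (hfin' : W2sq μ' ν' ≠ ⊤) : W2sq μ ν = W2sq μ' ν' :=
  (ENNReal.toReal_eq_toReal_iff' hfin hfin').mp
    ((Real.sqrt_inj ENNReal.toReal_nonneg ENNReal.toReal_nonneg).mp h)

variable {C U : Set (Rd d)} {P : Rd d → Rd d}

theorem ofReal_infDist_sq_le {x y : Rd d} (hy : y ∈ C) :
    ENNReal.ofReal (infDist x C ^ 2) ≤ ENNReal.ofReal (dist x y ^ 2) :=
  ENNReal.ofReal_le_ofReal (pow_le_pow_left₀ infDist_nonneg (infDist_le_dist_of_mem hy) 2)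

theorem lintegral_infDist_sq_le_cost2 {π : Measure (Rd d × Rd d)} {μ ν : Measure (Rd d)}
    (hπ : IsCoupling π μ ν) (hν : ∀ᵐ y ∂ν, y ∈ C) :
    ∫⁻ x, ENNReal.ofReal (infDist x C ^ 2) ∂μ ≤ cost2 π := by
  rw [← hπ.lintegral_fst (by fun_prop), cost2_eq_lintegral_dist_sq]
  exact lintegral_mono_ae ((hπ.ae_snd hν).mono fun p hp => ofReal_infDist_sq_le hp)

theorem lintegral_infDist_sq_le_W2sq {μ ν : Measure (Rd d)} (hν : ∀ᵐ y ∂ν, y ∈ C) :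
    ∫⁻ x, ENNReal.ofReal (infDist x C ^ 2) ∂μ ≤ W2sq μ ν :=
  le_sInf <| by
    rintro _ ⟨π, hπ, rfl⟩
    exact lintegral_infDist_sq_le_cost2 hπ hν

theorem W2sq_map_le_lintegral_infDist_sq {μ : Measure (Rd d)}
    (hP : AEMeasurable P μ) (hPd : ∀ᵐ x ∂μ, dist x (P x) = infDist x C) :
    W2sq μ (μ.map P) ≤ ∫⁻ x, ENNReal.ofReal (infDist x C ^ 2) ∂μ := by
  refine (W2sq_le_cost2 (isCoupling_map_prodMk hP)).trans_eq ?_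
  have hpair : AEMeasurable (fun x => (x, P x)) μ := aemeasurable_id.prodMk hP
  rw [cost2_eq_lintegral_dist_sq, lintegral_map' (by fun_prop) hpair]
  exact lintegral_congr_ae (hPd.mono fun x hx => by simp only [hx])

theorem ofReal_mul_measure_le_cost2_sub {π : Measure (Rd d × Rd d)} {μ ν : Measure (Rd d)}
    (hπ : IsCoupling π μ ν) (hν : ∀ᵐ y ∂ν, y ∈ C)
    (hm : ∫⁻ x, ENNReal.ofReal (infDist x C ^ 2) ∂μ ≠ ⊤) (ε : ℝ) :
    ENNReal.ofReal ε * π {p | ε ≤ dist p.1 p.2 ^ 2 - infDist p.1 C ^ 2} ≤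
      cost2 π - ∫⁻ x, ENNReal.ofReal (infDist x C ^ 2) ∂μ := by
  have hd : Measurable fun p : Rd d × Rd d => ENNReal.ofReal (infDist p.1 C ^ 2) := by fun_prop
  calc ENNReal.ofReal ε * π {p | ε ≤ dist p.1 p.2 ^ 2 - infDist p.1 C ^ 2}
      ≤ ENNReal.ofReal ε *
          π {p | ENNReal.ofReal ε ≤ ENNReal.ofReal (dist p.1 p.2 ^ 2 - infDist p.1 C ^ 2)} := by
        gcongr
        exact ENNReal.ofReal_le_ofReal
    _ ≤ ∫⁻ p, ENNReal.ofReal (dist p.1 p.2 ^ 2 - infDist p.1 C ^ 2) ∂π :=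
        mul_meas_ge_le_lintegral₀ (by fun_prop) _
    _ = ∫⁻ p, ENNReal.ofReal (dist p.1 p.2 ^ 2) - ENNReal.ofReal (infDist p.1 C ^ 2) ∂π :=
        lintegral_congr fun p => ENNReal.ofReal_sub _ (sq_nonneg _)
    _ = _ := by
        have hfst := hπ.lintegral_fst (f := fun x => ENNReal.ofReal (infDist x C ^ 2)) (by fun_prop)
        rw [lintegral_sub hd (hfst ▸ hm), hfst, cost2_eq_lintegral_dist_sq]
        exact (hπ.ae_snd hν).mono fun p hp => ofReal_infDist_sq_le hp

theorem exists_isCoupling_measure_le_dist_le {θ μ : Measure (Rd d)} [IsFiniteMeasure θ]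
    (hC : IsCompact C) (hU : IsOpen U) (hP : ∀ x ∈ U, projSet C x = {P x})
    (hPc : ContinuousOn P U) (hθU : ∀ᵐ x ∂θ, x ∈ U) (hμC : ∀ᵐ y ∂μ, y ∈ C)
    (hm : ∫⁻ x, ENNReal.ofReal (infDist x C ^ 2) ∂θ ≠ ⊤)
    (hW : W2sq θ μ ≤ ∫⁻ x, ENNReal.ofReal (infDist x C ^ 2) ∂θ) {η : ℝ} (hη : 0 < η) :
    ∃ π, IsCoupling π θ μ ∧ π {p | η ≤ dist p.2 (P p.1)} ≤ ENNReal.ofReal η := by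
  have hη2 : ENNReal.ofReal (η / 2) ≠ 0 := (ENNReal.ofReal_pos.mpr (half_pos hη)).ne'
  obtain ⟨K, hKU, hK, hθK⟩ := hU.measurableSet.exists_isCompact_sdiff_lt (measure_ne_top θ U) hη2
  obtain ⟨ε, hε, hεK⟩ := exists_pos_forall_dist_sq_sub_infDist_sq_lt hK hC
    (fun x hx => hP x (hKU hx)) (hPc.mono hKU) hη
  have hε0 : ENNReal.ofReal ε ≠ 0 := (ENNReal.ofReal_pos.mpr hε).ne'
  obtain ⟨π, hπ, hcost⟩ := exists_isCoupling_cost2_lt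
    (hW.trans_lt (ENNReal.lt_add_right hm (mul_ne_zero hε0 hη2)))
  have hexcess : π {p | ε ≤ dist p.1 p.2 ^ 2 - infDist p.1 C ^ 2} < ENNReal.ofReal (η / 2) := by
    refine (ENNReal.mul_lt_mul_iff_right hε0 ENNReal.ofReal_ne_top).mp ?_
    exact (ofReal_mul_measure_le_cost2_sub hπ hμC hm ε).trans_lt <|
      ENNReal.sub_lt_of_lt_add (lintegral_infDist_sq_le_cost2 hπ hμC) (by rwa [add_comm])
  have hbad : {p : Rd d × Rd d | η ≤ dist p.2 (P p.1)} ≤ᵐ[π]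
      (Prod.fst ⁻¹' (U \ K) ∪ {p | ε ≤ dist p.1 p.2 ^ 2 - infDist p.1 C ^ 2} : Set _) := by
    filter_upwards [hπ.ae_fst hθU, hπ.ae_snd hμC] with p hpU hpC hp
    by_cases hpK : p.1 ∈ K
    · exact Or.inr (not_lt.mp fun h => (hεK p.1 hpK p.2 hpC h).not_ge hp)
    · exact Or.inl ⟨hpU, hpK⟩
  refine ⟨π, hπ, ?_⟩
  calc π {p | η ≤ dist p.2 (P p.1)}
      ≤ π (Prod.fst ⁻¹' (U \ K)) + π {p | ε ≤ dist p.1 p.2 ^ 2 - infDist p.1 C ^ 2} :=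
        (measure_mono_ae hbad).trans (measure_union_le _ _)
    _ ≤ ENNReal.ofReal (η / 2) + ENNReal.ofReal (η / 2) := by
        rw [← Measure.map_apply measurable_fst (hU.measurableSet.diff hK.isClosed.measurableSet),
          hπ.1]
        exact add_le_add hθK.le hexcess.le
    _ = ENNReal.ofReal η := by
        rw [← ENNReal.ofReal_add (half_pos hη).le (half_pos hη).le, add_halves]

theorem eq_map_of_W2sq_le {θ μ : Measure (Rd d)} [IsProbabilityMeasure θ]
    [IsProbabilityMeasure μ] (hC : IsCompact C) (hU : IsOpen U)
    (hP : ∀ x ∈ U, projSet C x = {P x}) (hPc : ContinuousOn P U) (hPθ : AEMeasurable P θ)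
    (hθU : ∀ᵐ x ∂θ, x ∈ U) (hμC : ∀ᵐ y ∂μ, y ∈ C)
    (hm : ∫⁻ x, ENNReal.ofReal (infDist x C ^ 2) ∂θ ≠ ⊤)
    (hW : W2sq θ μ ≤ ∫⁻ x, ENNReal.ofReal (infDist x C ^ 2) ∂θ) :
    μ = θ.map P := by
  have := Measure.isProbabilityMeasure_map hPθ
  refine eq_of_forall_exists_measure_le_dist_le (X := Prod.snd)
    (Y := fun p : Rd d × Rd d => P p.1) fun η hη => ?_
  obtain ⟨π, hπ, hπη⟩ := exists_isCoupling_measure_le_dist_le hC hU hP hPc hθU hμC hm hW hη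
  have hPπ : AEMeasurable P (π.map Prod.fst) := hπ.1.symm ▸ hPθ
  refine ⟨π, hπ.isProbabilityMeasure, measurable_snd.aemeasurable,
    hPπ.comp_aemeasurable measurable_fst.aemeasurable, hπ.2, ?_, hπη⟩
  rw [← hπ.1]
  exact (AEMeasurable.map_map_of_aemeasurable hPπ measurable_fst.aemeasurable).symm

end MSP

theorem stmt5_general {d : ℕ} (r : ℝ) (C : Set (Rd d))
    (hCb : Bornology.IsBounded C) (hC : IsProxRegular r C)
    (θ : Measure (Rd d)) (hθ : IsP2 θ)
    (hθsupp : msupport θ ⊆ Metric.thickening r C)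
    (P : Rd d → Rd d)
    (hP : ∀ x, infDist x C < r → projSet C x = {P x})
    (hPc : ContinuousOn P {x | infDist x C < r}) :
    (IsP2 (θ.map P) ∧ msupport (θ.map P) ⊆ C) ∧
    W2 θ (θ.map P) =
      sInf {c : ℝ | ∃ μ : Measure (Rd d), IsP2 μ ∧ msupport μ ⊆ C ∧ c = W2 θ μ} ∧
    ∀ μ : Measure (Rd d), IsP2 μ → msupport μ ⊆ C →
      W2 θ μ = W2 θ (θ.map P) → μ = θ.map P := by
  have := hθ.1
  have hU : IsOpen {x | infDist x C < r} := isOpen_lt (continuous_infDist_pt C) continuous_const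
  have hθU : ∀ᵐ x ∂θ, infDist x C < r := (ae_mem_of_msupport_subset hθsupp).mono fun x hx => by
    obtain ⟨y, hy, hxy⟩ := mem_thickening_iff.mp hx
    exact (infDist_le_dist_of_mem hy).trans_lt hxy
  have hPθ : AEMeasurable P θ :=
    Measure.restrict_eq_self_of_ae_mem hθU ▸ hPc.aemeasurable hU.measurableSet
  have hPx : ∀ᵐ x ∂θ, P x ∈ projSet C x := hθU.mono fun x hx => (hP x hx).symm ▸ rfl
  have hν : ∀ᵐ y ∂θ.map P, y ∈ C :=
    (ae_map_iff hPθ hC.1.measurableSet).mpr (hPx.mono fun _ hx => hx.1)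
  have hWν : W2sq θ (θ.map P) = ∫⁻ x, ENNReal.ofReal (infDist x C ^ 2) ∂θ :=
    (W2sq_map_le_lintegral_infDist_sq hPθ (hPx.mono fun _ hx => hx.2)).antisymm
      (lintegral_infDist_sq_le_W2sq hν)
  have := Measure.isProbabilityMeasure_map hPθ
  have hνP2 : IsP2 (θ.map P) := isP2_of_ae_mem_of_isBounded hCb hν
  refine ⟨⟨hνP2, msupport_subset_of_ae_mem hC.1 hν⟩, ?_, fun μ hμ hμC hW => ?_⟩
  · refine (IsLeast.csInf_eq ⟨?_, ?_⟩).symm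
    · exact ⟨_, hνP2, msupport_subset_of_ae_mem hC.1 hν, rfl⟩
    rintro _ ⟨μ, hμ, hμC, rfl⟩
    exact W2_le_W2_of_W2sq_le (hWν ▸ lintegral_infDist_sq_le_W2sq (ae_mem_of_msupport_subset hμC))
      (W2sq_ne_top hθ hμ)
  · have := hμ.1
    exact eq_map_of_W2sq_le (Metric.isCompact_of_isClosed_isBounded hC.1 hCb) hU hP hPc hPθ hθU
      (ae_mem_of_msupport_subset hμC) (hWν ▸ W2sq_ne_top hθ hνP2)
      (W2sq_eq_of_W2_eq hW (W2sq_ne_top hθ hμ) (W2sq_ne_top hθ hνP2) ▸ hWν).le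

/-- Lemma (projection of a measure onto a prox-regular set: existence,
uniqueness, and the formula `θ_C = (P_C)♯θ`). -/
theorem stmt5 {d : ℕ} (r : ℝ) (hr : 0 < r) (C : Set (Rd d))
    (hCb : Bornology.IsBounded C) (hC : IsProxRegular r C)
    (θ : Measure (Rd d)) (hθ : IsP2 θ)
    (hθsupp : msupport θ ⊆ Metric.thickening r C)
    (P : Rd d → Rd d)
    (hP : ∀ x, infDist x C < r → projSet C x = {P x})
    (hPc : ContinuousOn P {x | infDist x C < r}) :
    (IsP2 (θ.map P) ∧ msupport (θ.map P) ⊆ C) ∧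
    W2 θ (θ.map P) =
      sInf {c : ℝ | ∃ μ : Measure (Rd d), IsP2 μ ∧ msupport μ ⊆ C ∧ c = W2 θ μ} ∧
    ∀ μ : Measure (Rd d), IsP2 μ → msupport μ ⊆ C →
      W2 θ μ = W2 θ (θ.map P) → μ = θ.map P :=
  stmt5_general r C hCb hC θ hθ hθsupp P hP hPc
end
end

section
/- Let T > 0, L > 0, M > 0, r > 0, r' > 0. Let (t,x) ↦ v_t(x) be a time-dependent vector field on [0,T]×ℝ^d which is measurable in t, L-Lipschitz in x, and bounded by L. Let 𝐂 : [0,T] ⇉ ℝ^d satisfy (A2) and suppose the graph of 𝐂, i.e. {(t,x) ∈ [0,T]×ℝ^d : x ∈ 𝐂(t)}, is r'-prox-regular. Let y : [0,T] → ℝ^d be a solution of the perturbed sweeping process ẏ(t) ∈ v_t(y(t)) − N_{𝐂(t)}(y(t)) for a.e. t ∈ [0,T] (in particular y(t) ∈ 𝐂(t) for all t). If t₀ ∈ (0,T) is such that ẏ(t₀) exists, then ξ + ẏ(t₀)·η = 0 for every (ξ,η) in the proximal normal cone N_{graph 𝐂}(t₀, y(t₀)). -/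
/-
A proximal normal `v` to `S` at `x` makes `t ↦ ⟪v, γ t - x⟫ - σ ‖γ t - x‖²` nonpositive along any
curve `γ` through `x` that stays in `S`, and it vanishes at the base point; so the base point is a
local maximum and the derivative `⟪v, γ'⟫` vanishes. Applied to the curve `t ↦ (t, y t)` in the graph
of `𝐂`, whose velocity at `t₀` is `(1, ẏ(t₀))`, this gives `ξ + ⟪ẏ(t₀), η⟫ = 0`.
-/

open MeasureTheory Filter Metric Set
open scoped Topology ENNReal NNReal RealInnerProductSpace

noncomputable section

open MSP

theorem inner_eq_zero_of_mem_proxNormalCone_of_hasDerivAt {F : Type*} [NormedAddCommGroup F]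
    [InnerProductSpace ℝ F] {S : Set F} {v : F} {γ : ℝ → F} {γ' : F} {t₀ : ℝ}
    (hγ : HasDerivAt γ γ' t₀) (hγS : ∀ᶠ t in 𝓝 t₀, γ t ∈ S)
    (hv : v ∈ proxNormalCone S (γ t₀)) : ⟪v, γ'⟫ = 0 := by
  obtain ⟨σ, -, hσ⟩ := hv
  have hdisp : HasDerivAt (fun t => γ t - γ t₀) γ' t₀ := hγ.sub_const _
  have hderiv : HasDerivAt (fun t => ⟪v, γ t - γ t₀⟫ - σ * ‖γ t - γ t₀‖ ^ 2) ⟪v, γ'⟫ t₀ := by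
    have h := ((hasDerivAt_const t₀ v).inner ℝ hdisp).sub (hdisp.norm_sq.const_mul σ)
    exact h.congr_deriv (by simp)
  have hmax : IsLocalMax (fun t => ⟪v, γ t - γ t₀⟫ - σ * ‖γ t - γ t₀‖ ^ 2) t₀ := by
    filter_upwards [hγS] with t ht
    simpa using hσ _ ht
  exact hmax.hasDerivAt_eq_zero hderiv

theorem toLp_mem_graphSet {d : ℕ} {T t : ℝ} {C : ℝ → Set (Rd d)} {x : Rd d}
    (ht : t ∈ Icc 0 T) (hx : x ∈ C t) :
    (WithLp.equiv 2 (ℝ × Rd d)).symm (t, x) ∈ graphSet T C :=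
  ⟨ht, hx⟩

theorem HasDerivAt.toLp_id_prodMk {E : Type*} [NormedAddCommGroup E] [NormedSpace ℝ E]
    {y : ℝ → E} {y' : E} {t₀ : ℝ} (hy : HasDerivAt y y' t₀) :
    HasDerivAt (fun t => (WithLp.equiv 2 (ℝ × E)).symm (t, y t))
      ((WithLp.equiv 2 (ℝ × E)).symm (1, y')) t₀ :=
  (WithLp.prodContinuousLinearEquiv 2 ℝ ℝ E).symm.hasFDerivAt.comp_hasDerivAt t₀
    ((hasDerivAt_id t₀).prodMk hy)

theorem stmt15_general {d : ℕ} (T : ℝ)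
    (C : ℝ → Set (Rd d))
    (y : ℝ → Rd d)
    (hyC : ∀ t ∈ Icc (0:ℝ) T, y t ∈ C t)
    (t0 : ℝ) (ht0 : t0 ∈ Ioo (0:ℝ) T) (y0' : Rd d) (hy0' : HasDerivAt y y0' t0) :
    ∀ ξ : ℝ, ∀ η : Rd d,
      (WithLp.equiv 2 (ℝ × Rd d)).symm (ξ, η) ∈
        proxNormalCone (graphSet T C) ((WithLp.equiv 2 (ℝ × Rd d)).symm (t0, y t0)) →
      ξ + ⟪y0', η⟫ = 0 := by
  intro ξ η hnormal
  have hcurve : ∀ᶠ t in 𝓝 t0, (WithLp.equiv 2 (ℝ × Rd d)).symm (t, y t) ∈ graphSet T C := by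
    filter_upwards [isOpen_Ioo.mem_nhds ht0] with t ht
    exact toLp_mem_graphSet (Ioo_subset_Icc_self ht) (hyC t (Ioo_subset_Icc_self ht))
  have htangent := inner_eq_zero_of_mem_proxNormalCone_of_hasDerivAt
    hy0'.toLp_id_prodMk hcurve hnormal
  rw [WithLp.prod_inner_apply] at htangent
  simpa [real_inner_comm] using htangent

/-- Proposition (no-flux property of the perturbed sweeping process: the
velocity is tangent to the graph of the moving set). -/
theorem stmt15 {d : ℕ} (T L M r r' : ℝ) (hT : 0 < T) (hL : 0 < L) (hM : 0 < M)
    (hr : 0 < r) (hr' : 0 < r')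
    (v : ℝ → Rd d → Rd d)
    (hvm : ∀ x, Measurable (fun t => v t x))
    (hvlip : ∀ t, LipschitzWith (Real.toNNReal L) (v t))
    (hvbdd : ∀ t x, ‖v t x‖ ≤ L)
    (C : ℝ → Set (Rd d)) (hC : A2 T M r C)
    (hgraph : IsProxRegular r' (graphSet T C))
    (y : ℝ → Rd d)
    (hyC : ∀ t ∈ Icc (0:ℝ) T, y t ∈ C t)
    (hyac : ∃ g : ℝ → ℝ, IntegrableOn g (Icc (0:ℝ) T) ∧
      ∀ s t : ℝ, 0 ≤ s → s ≤ t → t ≤ T → ‖y t - y s‖ ≤ ∫ τ in Ioc s t, g τ)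
    (hincl : ∀ᵐ t ∂(volume.restrict (Icc (0:ℝ) T)),
      ∃ y' : Rd d, HasDerivAt y y' t ∧ v t (y t) - y' ∈ proxNormalCone (C t) (y t))
    (t0 : ℝ) (ht0 : t0 ∈ Ioo (0:ℝ) T) (y0' : Rd d) (hy0' : HasDerivAt y y0' t0) :
    ∀ ξ : ℝ, ∀ η : Rd d,
      (WithLp.equiv 2 (ℝ × Rd d)).symm (ξ, η) ∈
        proxNormalCone (graphSet T C) ((WithLp.equiv 2 (ℝ × Rd d)).symm (t0, y t0)) →
      ξ + ⟪y0', η⟫ = 0 :=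
  stmt15_general T C y hyC t0 ht0 y0' hy0'
end
end

section
/- Let r > 0, let Ω ⊂ ℝ^d be compact, and let θ be a Borel probability measure on ℝ^d. Then the family 𝒞 = {C : C is a compact r-prox-regular subset of ℝ^d, C ⊂ Ω, θ(C) = 1} is compact in the space of compact subsets of ℝ^d equipped with the Hausdorff distance: every sequence C_n ∈ 𝒞 has a subsequence converging in Hausdorff distance to some C ∈ 𝒞 (in particular, the Hausdorff limit of compact r-prox-regular subsets of Ω carrying full θ-measure is again r-prox-regular, contained in Ω, and satisfies θ(C) = 1). -/
open MeasureTheory Filter Metric Set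
open scoped Topology ENNReal NNReal RealInnerProductSpace

noncomputable section

open MSP

/-!
The proof rests on the proximal normal inequality `2 r ⟪x - p, a - p⟫ ≤ d_S(x) ‖a - p‖²`
(for `d_S(x) < r`, `p` a nearest point of `x` in `S`, `a ∈ S`).

An `r`-prox-regular set satisfies it (Federer's argument): the point `p + τ (x - p) / ‖x - p‖`
stays at distance `τ` from `S` for every `τ < r`. To see this, push `x` away from its projection
in small steps; since the projection is uniformly continuous near `x`, each step of length `h`
increases `d_S` by `h` up to an arbitrarily small relative loss, and a farthest point from `S` in
`closedBall x (τ - ‖x - p‖)` must then lie on the ray.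

The inequality passes to Hausdorff limits, since projections onto `Cₙ` subconverge to a nearest
point of `C` and every point of `C` is a limit of points of `Cₙ`. Conversely, the inequality makes
the projection unique and, on `{d_S ≤ s}` with `s < r`, Lipschitz with constant `r / (r - s)`;
so the limit is again `r`-prox-regular. Blaschke's selection theorem provides the limit, and full
measure survives because a point outside the closed limit lies outside `Cₙ` for large `n`.
-/

section InnerProduct

variable {E : Type*} [NormedAddCommGroup E] [InnerProductSpace ℝ E]

theorem sq_dist_lineMap_eq (p x a : E) (s : ℝ) :
    dist (AffineMap.lineMap p x s) a ^ 2 =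
      (s * dist x p) ^ 2 - 2 * s * ⟪x - p, a - p⟫ + ‖a - p‖ ^ 2 := by
  rw [dist_eq_norm, AffineMap.lineMap_apply_module',
    show s • (x - p) + p - a = s • (x - p) - (a - p) by abel, norm_sub_sq_real (s • (x - p)),
    norm_smul, real_inner_smul_left, dist_eq_norm, mul_pow, mul_pow, Real.norm_eq_abs, sq_abs]
  ring

theorem mul_dist_le_of_two_mul_inner_le {u v pu pv : E} {r s : ℝ} (hs₀ : 0 ≤ s) (hs : s < r)
    (hu : 2 * r * ⟪u - pu, pv - pu⟫ ≤ s * ‖pv - pu‖ ^ 2)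
    (hv : 2 * r * ⟪v - pv, pu - pv⟫ ≤ s * ‖pu - pv‖ ^ 2) :
    (r - s) * dist pu pv ≤ r * dist u v := by
  have hsum : ⟪u - pu, pv - pu⟫ + ⟪v - pv, pu - pv⟫ = ⟪u - v, pv - pu⟫ + ‖pv - pu‖ ^ 2 := by
    rw [← neg_sub pv pu, inner_neg_right, ← sub_eq_add_neg, ← inner_sub_left,
      ← real_inner_self_eq_norm_sq, ← inner_add_left]
    congr 1
    abel
  have hcs : -⟪u - v, pv - pu⟫ ≤ dist u v * dist pu pv := by
    rw [← inner_neg_right, neg_sub, dist_eq_norm, dist_eq_norm]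
    exact real_inner_le_norm _ _
  rw [norm_sub_rev pu pv, ← dist_eq_norm, dist_comm] at hv
  rw [← dist_eq_norm, dist_comm] at hu hsum
  rcases (dist_nonneg (x := pu) (y := pv)).eq_or_lt with h0 | hpos
  · rw [← h0]
    nlinarith [dist_nonneg (x := u) (y := v)]
  · nlinarith

end InnerProduct

section HausdorffLimit

variable {X : Type*} [MetricSpace X] {A : ℕ → Set X} {C : Set X}

theorem tendsto_infDist_of_tendsto_hausdorffDist (hfin : ∀ n, hausdorffEDist (A n) C ≠ ⊤)
    (hA : Tendsto (fun n => hausdorffDist (A n) C) atTop (𝓝 0)) (x : X) :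
    Tendsto (fun n => infDist x (A n)) atTop (𝓝 (infDist x C)) := by
  refine tendsto_sub_nhds_zero_iff.1 (squeeze_zero_norm (fun n => ?_) hA)
  rw [Real.norm_eq_abs, abs_sub_le_iff]
  have hfin' : hausdorffEDist C (A n) ≠ ⊤ := by rw [hausdorffEDist_comm]; exact hfin n
  have h₁ := infDist_le_infDist_add_hausdorffDist (x := x) (hfin n)
  have h₂ := infDist_le_infDist_add_hausdorffDist (x := x) hfin'
  rw [hausdorffDist_comm] at h₂
  constructor <;> linarith

theorem mem_of_tendsto_of_tendsto_hausdorffDist (hC : IsClosed C) (hCne : C.Nonempty)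
    (hfin : ∀ n, hausdorffEDist (A n) C ≠ ⊤)
    (hA : Tendsto (fun n => hausdorffDist (A n) C) atTop (𝓝 0)) {a : ℕ → X} {y : X}
    (ha : ∀ᶠ n in atTop, a n ∈ A n) (hay : Tendsto a atTop (𝓝 y)) : y ∈ C := by
  have hle : infDist y C ≤ 0 :=
    le_of_tendsto_of_tendsto (((continuous_infDist_pt C).tendsto y).comp hay) hA
      (ha.mono fun n hn => infDist_le_hausdorffDist_of_mem hn (hfin n))
  exact (hC.mem_iff_infDist_zero hCne).2 (le_antisymm hle infDist_nonneg)

theorem exists_tendsto_of_tendsto_hausdorffDist (hfin : ∀ n, hausdorffEDist (A n) C ≠ ⊤)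
    (hA : Tendsto (fun n => hausdorffDist (A n) C) atTop (𝓝 0)) {y : X} (hy : y ∈ C) :
    ∃ a : ℕ → X, (∀ n, a n ∈ A n) ∧ Tendsto a atTop (𝓝 y) := by
  have hfin' : ∀ n, hausdorffEDist C (A n) ≠ ⊤ := fun n => by
    rw [hausdorffEDist_comm]; exact hfin n
  choose a ha hay using fun n : ℕ => exists_dist_lt_of_hausdorffDist_lt hy
    (lt_add_of_pos_right (hausdorffDist C (A n)) (Nat.one_div_pos_of_nat (n := n))) (hfin' n)
  refine ⟨a, ha, tendsto_iff_dist_tendsto_zero.2 (squeeze_zero (fun n => dist_nonneg)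
    (fun n => ?_) (by simpa using hA.add tendsto_one_div_add_atTop_nhds_zero_nat))⟩
  rw [dist_comm, ← hausdorffDist_comm]
  simpa only [one_div] using (hay n).le

theorem ae_mem_of_tendsto_hausdorffDist [MeasurableSpace X] {μ : Measure X} (hC : IsClosed C)
    (hCne : C.Nonempty) (hfin : ∀ n, hausdorffEDist (A n) C ≠ ⊤)
    (hA : Tendsto (fun n => hausdorffDist (A n) C) atTop (𝓝 0)) (h : ∀ n, ∀ᵐ x ∂μ, x ∈ A n) :
    ∀ᵐ x ∂μ, x ∈ C :=
  (ae_all_iff.2 h).mono fun _ hx => mem_of_tendsto_of_tendsto_hausdorffDist hC hCne hfin hA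
    (Eventually.of_forall hx) tendsto_const_nhds

theorem IsCompact.exists_subseq_tendsto_hausdorffDist {Ω : Set X} (hΩ : IsCompact Ω)
    (hA : ∀ n, IsClosed (A n)) (hAne : ∀ n, (A n).Nonempty) (hAΩ : ∀ n, A n ⊆ Ω) :
    ∃ C, IsCompact C ∧ C.Nonempty ∧ C ⊆ Ω ∧ ∃ φ : ℕ → ℕ, StrictMono φ ∧
      Tendsto (fun k => hausdorffDist (A (φ k)) C) atTop (𝓝 0) := by
  have : CompactSpace Ω := isCompact_iff_compactSpace.1 hΩ
  let K : ℕ → TopologicalSpace.NonemptyCompacts Ω := fun n =>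
    { carrier := Subtype.val ⁻¹' A n
      isCompact' := ((hA n).preimage continuous_subtype_val).isCompact
      nonempty' := let ⟨y, hy⟩ := hAne n; ⟨⟨y, hAΩ n hy⟩, hy⟩ }
  obtain ⟨L, -, φ, hφ, hL⟩ := isCompact_univ.tendsto_subseq (x := K) fun n => mem_univ _
  refine ⟨Subtype.val '' (L : Set Ω), L.isCompact.image continuous_subtype_val,
    L.nonempty.image _, Subtype.coe_image_subset _ _, φ, hφ, ?_⟩
  have hdist : ∀ n, hausdorffDist (A n) (Subtype.val '' (L : Set Ω)) = dist (K n) L := by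
    intro n
    rw [NonemptyCompacts.dist_eq, ← hausdorffDist_image (isometry_subtype_coe (s := Ω))]
    change hausdorffDist (A n) _ = hausdorffDist (Subtype.val '' (Subtype.val ⁻¹' A n)) _
    rw [Subtype.image_preimage_coe, inter_eq_self_of_subset_right (hAΩ n)]
  simpa only [hdist, Function.comp_apply] using tendsto_iff_dist_tendsto_zero.1 hL

end HausdorffLimit

namespace MSP

variable {E : Type*} [NormedAddCommGroup E] [InnerProductSpace ℝ E]

theorem two_mul_inner_le_of_mem_projSet {S : Set E} {x p a : E} (hp : p ∈ projSet S x)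
    (ha : a ∈ S) : 2 * ⟪x - p, a - p⟫ ≤ ‖a - p‖ ^ 2 := by
  have hle : ‖x - p‖ ≤ ‖x - a‖ := by
    rw [← dist_eq_norm, ← dist_eq_norm, hp.2]
    exact infDist_le_dist_of_mem ha
  have hsq : ‖x - a‖ ^ 2 = ‖x - p‖ ^ 2 - 2 * ⟪x - p, a - p⟫ + ‖a - p‖ ^ 2 := by
    rw [show x - a = (x - p) - (a - p) by abel, norm_sub_sq_real]
  nlinarith [norm_nonneg (x - p)]

theorem sub_le_sq_dist_lineMap_of_mem_projSet {S : Set E} {z p q : E} (hp : p ∈ projSet S z)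
    (hq : q ∈ S) {s : ℝ} (hs : 0 ≤ s) :
    (s * dist z p) ^ 2 - (s - 1) * ‖q - p‖ ^ 2 ≤ dist (AffineMap.lineMap p z s) q ^ 2 := by
  rw [sq_dist_lineMap_eq]
  nlinarith [mul_le_mul_of_nonneg_left (two_mul_inner_le_of_mem_projSet hp hq) hs]

theorem dist_lineMap_of_mem_projSet {S : Set E} {y p : E} (hp : p ∈ projSet S y)
    (hy : 0 < infDist y S) {h : ℝ} (hh : 0 ≤ h) :
    dist (AffineMap.lineMap p y (1 + h / infDist y S)) y = h := by
  rw [dist_lineMap_right, dist_comm, hp.2, sub_add_cancel_left, norm_neg, Real.norm_eq_abs,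
    abs_of_nonneg (by positivity), div_mul_cancel₀ h hy.ne']

theorem add_sub_le_infDist_lineMap {S : Set E} {y p q : E} {ρ h κ : ℝ} (hρ : 0 < ρ)
    (hD : ρ ≤ infDist y S) (hh : 0 ≤ h) (hp : p ∈ projSet S y)
    (hq : q ∈ projSet S (AffineMap.lineMap p y (1 + h / infDist y S)))
    (hqp : ‖q - p‖ ≤ κ * ρ) :
    infDist y S + h - h * κ ^ 2 ≤ infDist (AffineMap.lineMap p y (1 + h / infDist y S)) S := by
  have hD₀ : 0 < infDist y S := hρ.trans_le hD
  have hsq := sub_le_sq_dist_lineMap_of_mem_projSet hp hq.1 (s := 1 + h / infDist y S)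
    (by positivity)
  rw [hq.2, hp.2, add_sub_cancel_left, add_mul, div_mul_cancel₀ h hD₀.ne', one_mul] at hsq
  set D := infDist y S
  set D' := infDist (AffineMap.lineMap p y (1 + h / D)) S
  have hloss : h / D * ‖q - p‖ ^ 2 ≤ h * κ ^ 2 * ρ := by
    calc h / D * ‖q - p‖ ^ 2 ≤ h / ρ * (κ * ρ) ^ 2 := by gcongr
      _ = h * κ ^ 2 * ρ := by field_simp
  have hD' : 0 ≤ D' := infDist_nonneg
  have hc : 0 ≤ h * κ ^ 2 := by positivity
  -- `(D + h - c) ^ 2 ≤ (D + h) ^ 2 - c ρ ≤ D' ^ 2` for the loss `c = h κ ^ 2`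
  by_contra! hlt
  nlinarith [mul_nonneg hc (by linarith : 0 ≤ D + h - ρ), mul_nonneg hc (hD'.trans hlt.le),
    mul_pos (sub_pos.2 hlt) (by linarith : 0 < D + h - h * κ ^ 2 + D')]

theorem exists_le_infDist_of_forall_norm_sub_le {S : Set E} {P : E → E} {x : E} {R h κ : ℝ}
    (hx : 0 < infDist x S) (hh : 0 ≤ h) (hκ₀ : 0 ≤ κ) (hκ₁ : κ ≤ 1)
    (hP : ∀ y ∈ closedBall x R, P y ∈ projSet S y)
    (hPh : ∀ y ∈ closedBall x R, ∀ y' ∈ closedBall x R, dist y' y ≤ h →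
      ‖P y' - P y‖ ≤ κ * infDist x S) :
    ∀ k : ℕ, k * h ≤ R →
      ∃ y ∈ closedBall x (k * h), infDist x S + k * h * (1 - κ ^ 2) ≤ infDist y S := by
  intro k
  induction k with
  | zero => exact fun _ => ⟨x, mem_closedBall_self (by simp), by simp⟩
  | succ k ih =>
    intro hk
    push_cast at hk ⊢
    obtain ⟨y, hy, hDy⟩ := ih (by nlinarith)
    have hκ : 0 ≤ 1 - κ ^ 2 := by nlinarith
    have hxy : infDist x S ≤ infDist y S := by nlinarith [mul_nonneg (Nat.cast_nonneg k) hh]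
    have hyR : y ∈ closedBall x R := closedBall_subset_closedBall (by nlinarith) hy
    set y' := AffineMap.lineMap (P y) y (1 + h / infDist y S)
    have hy'y : dist y' y = h := dist_lineMap_of_mem_projSet (hP y hyR) (hx.trans_le hxy) hh
    have hy' : y' ∈ closedBall x ((k + 1) * h) := by
      rw [mem_closedBall] at hy ⊢
      linarith [dist_triangle y' y x]
    have hy'R : y' ∈ closedBall x R := closedBall_subset_closedBall hk hy'
    refine ⟨y', hy', ?_⟩
    have := add_sub_le_infDist_lineMap hx hxy hh (hP y hyR) (hP y' hy'R)
      (hPh y hyR y' hy'R hy'y.le)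
    nlinarith

theorem IsProxRegular.exists_le_infDist [ProperSpace E] {r τ : ℝ} {S : Set E}
    (hS : IsProxRegular r S) {x : E} (hx : 0 < infDist x S) (hxτ : infDist x S ≤ τ)
    (hτ : τ < r) {ε : ℝ} (hε : 0 < ε) :
    ∃ y ∈ closedBall x (τ - infDist x S), τ - ε ≤ infDist y S := by
  obtain ⟨-, P, hPS, hPc⟩ := hS
  set ρ := infDist x S
  have hKr : closedBall x (τ - ρ) ⊆ {y | infDist y S < r} := fun y hy => by
    have := infDist_le_infDist_add_dist (x := y) (y := x) (s := S)
    rw [mem_closedBall] at hy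
    exact (by linarith : infDist y S < r)
  have hP : ∀ y ∈ closedBall x (τ - ρ), P y ∈ projSet S y := fun y hy => by
    rw [hPS y (hKr hy)]
    rfl
  have huc := (isCompact_closedBall x (τ - ρ)).uniformContinuousOn_of_continuous (hPc.mono hKr)
  -- each step of length `h` loses at most `h κ ^ 2`, in total `(τ - ρ) κ ^ 2 ≤ ε`
  set κ := ε / (τ - ρ + ε)
  have hκ₀ : 0 < κ := div_pos hε (by linarith)
  have hκ₁ : κ ≤ 1 := (div_le_one (by linarith)).2 (by linarith)
  obtain ⟨δ, hδ, hPδ⟩ := Metric.uniformContinuousOn_iff.1 huc (κ * ρ) (by positivity)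
  obtain ⟨N, hN⟩ := exists_nat_gt ((τ - ρ) / δ)
  set h := (τ - ρ) / (N + 1)
  have hNh : ((N + 1 : ℕ) : ℝ) * h = τ - ρ := by
    push_cast
    exact mul_div_cancel₀ _ (by positivity)
  have hhδ : h < δ := by
    rw [div_lt_iff₀ (by positivity)]
    nlinarith [(div_lt_iff₀ hδ).1 hN]
  obtain ⟨y, hy, hDy⟩ := exists_le_infDist_of_forall_norm_sub_le hx (h := h)
    (div_nonneg (by linarith) (by positivity)) hκ₀.le hκ₁ hP
    (fun y hy y' hy' hyy' => by
      simpa only [dist_eq_norm] using (hPδ y' hy' y hy (hyy'.trans_lt hhδ)).le)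
    (N + 1) hNh.le
  rw [hNh] at hy hDy
  refine ⟨y, hy, ?_⟩
  have hloss : (τ - ρ) * κ ≤ ε := by
    rw [mul_div_assoc', div_le_iff₀ (by linarith)]
    nlinarith
  nlinarith [mul_le_mul_of_nonneg_left hκ₁ (mul_nonneg (by linarith : 0 ≤ τ - ρ) hκ₀.le)]

theorem IsProxRegular.infDist_lineMap_eq [ProperSpace E] {r τ : ℝ} {S : Set E}
    (hS : IsProxRegular r S) {x p : E} (hp : p ∈ projSet S x) (hx : 0 < dist x p)
    (hxτ : dist x p ≤ τ) (hτ : τ < r) :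
    infDist (AffineMap.lineMap p x (τ / dist x p)) S = τ := by
  set ρ := dist x p
  have hτ₀ : 0 < τ := hx.trans_le hxτ
  obtain ⟨w, hw, hmax⟩ := (isCompact_closedBall x (τ - ρ)).exists_isMaxOn
    (nonempty_closedBall.2 (by linarith)) (continuous_infDist_pt S).continuousOn
  have hτw : τ ≤ infDist w S := le_of_forall_pos_le_add fun ε hε => by
    have hxS : infDist x S = ρ := hp.2.symm
    obtain ⟨y, hy, hDy⟩ := hS.exists_le_infDist (by rwa [hxS]) (by rwa [hxS]) hτ hε
    rw [hxS] at hy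
    linarith [isMaxOn_iff.1 hmax y hy]
  have hwx : dist w x ≤ τ - ρ := mem_closedBall.1 hw
  have hwp : infDist w S ≤ dist w p := infDist_le_dist_of_mem hp.1
  have htri := dist_triangle w x p
  have hwp' : dist w p = τ := by linarith
  -- equality in the triangle inequality puts `x` on the segment `[p, w]`
  have hxw : x = AffineMap.lineMap p w (ρ / τ) := by
    apply eq_lineMap_of_dist_eq_mul_of_dist_eq_mul
    · rw [dist_comm p x, dist_comm p w, hwp', div_mul_cancel₀ ρ hτ₀.ne']
    · rw [dist_comm p w, hwp', sub_mul, div_mul_cancel₀ ρ hτ₀.ne', dist_comm x w]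
      linarith
  have hw_eq : AffineMap.lineMap p x (τ / ρ) = w := by
    rw [hxw, AffineMap.lineMap_lineMap_right, div_mul_div_cancel₀ hx.ne', div_self hτ₀.ne',
      AffineMap.lineMap_apply_one]
  rw [hw_eq]
  linarith

theorem IsProxRegular.two_mul_inner_le [ProperSpace E] {r : ℝ} {S : Set E}
    (hS : IsProxRegular r S) {x p a : E} (hx : infDist x S < r) (hp : p ∈ projSet S x)
    (ha : a ∈ S) : 2 * r * ⟪x - p, a - p⟫ ≤ dist x p * ‖a - p‖ ^ 2 := by
  rcases (dist_nonneg (x := x) (y := p)).eq_or_lt with h0 | hρ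
  · rw [dist_comm, eq_comm, dist_eq_zero] at h0
    simp [h0]
  set ρ := dist x p
  have hρr : ρ < r := hp.2.trans_lt hx
  have hIco : ∀ τ ∈ Ico ρ r, 2 * τ * ⟪x - p, a - p⟫ ≤ ρ * ‖a - p‖ ^ 2 := by
    rintro τ ⟨hρτ, hτr⟩
    have hd := infDist_le_dist_of_mem (x := AffineMap.lineMap p x (τ / ρ)) ha
    rw [hS.infDist_lineMap_eq hp hρ hρτ hτr] at hd
    have hsq := pow_le_pow_left₀ (hρ.le.trans hρτ) hd 2
    rw [sq_dist_lineMap_eq, div_mul_cancel₀ τ hρ.ne'] at hsq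
    have h2 : 2 * (τ / ρ) * ⟪x - p, a - p⟫ * ρ = 2 * τ * ⟪x - p, a - p⟫ := by
      field_simp
    nlinarith
  have hIcc : Icc ρ r ⊆ {τ | 2 * τ * ⟪x - p, a - p⟫ ≤ ρ * ‖a - p‖ ^ 2} := by
    rw [← closure_Ico hρr.ne]
    exact (isClosed_le (by fun_prop) continuous_const).closure_subset_iff.2 hIco
  exact hIcc ⟨hρr.le, le_rfl⟩

/-- Hypomonotonicity of proximal normals: a unit proximal normal `v` at `p ∈ S` satisfies
`⟪v, a - p⟫ ≤ ‖a - p‖² / (2 r)`, here written for `v = (x - p) / d_S(x)`. -/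
def HasProxNormalIneq (r : ℝ) (S : Set E) : Prop :=
  ∀ x, infDist x S < r →
    ∃ p ∈ projSet S x, ∀ a ∈ S, 2 * r * ⟪x - p, a - p⟫ ≤ infDist x S * ‖a - p‖ ^ 2

theorem IsProxRegular.hasProxNormalIneq [ProperSpace E] {r : ℝ} {S : Set E}
    (hS : IsProxRegular r S) : HasProxNormalIneq r S := by
  intro x hx
  obtain ⟨P, hP, -⟩ := hS.2
  have hPx : P x ∈ projSet S x := by
    rw [hP x hx]
    rfl
  exact ⟨P x, hPx, fun a ha => hPx.2 ▸ hS.two_mul_inner_le hx hPx ha⟩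

theorem eq_of_mem_projSet_of_two_mul_inner_le {r : ℝ} {S : Set E} {x p a : E}
    (hp : p ∈ projSet S x) (ha : a ∈ projSet S x) (hx : infDist x S < r)
    (h : 2 * r * ⟪x - p, a - p⟫ ≤ infDist x S * ‖a - p‖ ^ 2) : a = p := by
  have hxa : ‖x - a‖ = ‖x - p‖ := by rw [← dist_eq_norm, ← dist_eq_norm, ha.2, hp.2]
  have hsq : ‖x - a‖ ^ 2 = ‖x - p‖ ^ 2 - 2 * ⟪x - p, a - p⟫ + ‖a - p‖ ^ 2 := by
    rw [show x - a = (x - p) - (a - p) by abel, norm_sub_sq_real]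
  have hK : r * ‖a - p‖ ^ 2 = 2 * r * ⟪x - p, a - p⟫ := by
    rw [hxa] at hsq
    linear_combination -r * hsq
  have h0 : (r - infDist x S) * ‖a - p‖ ^ 2 ≤ 0 := by linarith
  have : ‖a - p‖ ^ 2 = 0 :=
    le_antisymm (nonpos_of_mul_nonpos_right h0 (by linarith)) (sq_nonneg _)
  simpa [sub_eq_zero] using this

theorem HasProxNormalIneq.isProxRegular {r : ℝ} {S : Set E} (hS : IsClosed S)
    (h : HasProxNormalIneq r S) : IsProxRegular r S := by
  choose! P hP hPineq using h
  refine ⟨hS, P, fun x hx => Set.eq_singleton_iff_unique_mem.2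
    ⟨hP x hx, fun a ha => eq_of_mem_projSet_of_two_mul_inner_le (hP x hx) ha hx
      (hPineq x hx a ha.1)⟩, fun b hb => ContinuousAt.continuousWithinAt ?_⟩
  obtain ⟨s, hb', hsr⟩ := exists_between (α := ℝ) hb
  have hs₀ : 0 ≤ s := infDist_nonneg.trans hb'.le
  have hlip : LipschitzOnWith (r / (r - s)).toNNReal P {y | infDist y S < s} := by
    refine LipschitzOnWith.of_dist_le_mul fun u hu v hv => ?_
    have hineq : ∀ y, infDist y S < s → ∀ a ∈ S,
        2 * r * ⟪y - P y, a - P y⟫ ≤ s * ‖a - P y‖ ^ 2 := fun y hy a ha =>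
      (hPineq y (hy.trans hsr) a ha).trans (by gcongr)
    have := mul_dist_le_of_two_mul_inner_le hs₀ hsr (hineq u hu _ (hP v (hv.trans hsr)).1)
      (hineq v hv _ (hP u (hu.trans hsr)).1)
    rw [Real.coe_toNNReal _ (div_nonneg (by linarith) (by linarith)), div_mul_eq_mul_div,
      le_div_iff₀ (by linarith)]
    linarith
  exact hlip.continuousOn.continuousAt
    ((isOpen_lt (continuous_infDist_pt S) continuous_const).mem_nhds hb')

theorem HasProxNormalIneq.of_tendsto_hausdorffDist {r : ℝ} {Ω : Set E} (hΩ : IsCompact Ω)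
    {A : ℕ → Set E} {C : Set E} (hAΩ : ∀ n, A n ⊆ Ω) (hA : ∀ n, HasProxNormalIneq r (A n))
    (hC : IsClosed C) (hCne : C.Nonempty) (hfin : ∀ n, hausdorffEDist (A n) C ≠ ⊤)
    (hconv : Tendsto (fun n => hausdorffDist (A n) C) atTop (𝓝 0)) :
    HasProxNormalIneq r C := by
  intro x hx
  choose! p hp hpineq using fun n => hA n x
  have hev := (tendsto_infDist_of_tendsto_hausdorffDist hfin hconv x).eventually_lt_const hx
  obtain ⟨q, -, ψ, hψ, hpq⟩ :=
    hΩ.tendsto_subseq' (hev.mono fun n hn => hAΩ n (hp n hn).1).frequently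
  have hfinψ : ∀ j, hausdorffEDist (A (ψ j)) C ≠ ⊤ := fun j => hfin (ψ j)
  have hconvψ := hconv.comp hψ.tendsto_atTop
  have hevψ := hψ.tendsto_atTop.eventually hev
  have hdistψ := tendsto_infDist_of_tendsto_hausdorffDist hfinψ hconvψ x
  have hqC : q ∈ C := mem_of_tendsto_of_tendsto_hausdorffDist hC hCne hfinψ hconvψ
    (hevψ.mono fun j hj => (hp (ψ j) hj).1) hpq
  have hxq : dist x q = infDist x C := tendsto_nhds_unique_of_eventuallyEq
    (tendsto_const_nhds.dist hpq) hdistψ (hevψ.mono fun j hj => (hp (ψ j) hj).2)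
  refine ⟨q, ⟨hqC, hxq⟩, fun a ha => ?_⟩
  obtain ⟨b, hb, hba⟩ := exists_tendsto_of_tendsto_hausdorffDist hfinψ hconvψ ha
  refine le_of_tendsto_of_tendsto ?_ ?_ (hevψ.mono fun j hj => hpineq (ψ j) hj (b j) (hb j))
  · exact ((tendsto_const_nhds.sub hpq).inner (hba.sub hpq)).const_mul _
  · exact hdistψ.mul ((hba.sub hpq).norm.pow 2)

end MSP

theorem stmt17_general {d : ℕ} (r : ℝ) (Ω : Set (Rd d)) (hΩ : IsCompact Ω)
    (θ : Measure (Rd d)) (hθ : IsProbabilityMeasure θ)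
    (Cn : ℕ → Set (Rd d))
    (hCn : ∀ n, IsCompact (Cn n) ∧ IsProxRegular r (Cn n) ∧ Cn n ⊆ Ω ∧ θ (Cn n) = 1) :
    ∃ C : Set (Rd d),
      (IsCompact C ∧ IsProxRegular r C ∧ C ⊆ Ω ∧ θ C = 1) ∧
      ∃ φ : ℕ → ℕ, StrictMono φ ∧
        Tendsto (fun k => hausdorffDist (Cn (φ k)) C) atTop (𝓝 0) := by
  have hne : ∀ n, (Cn n).Nonempty := fun n =>
    nonempty_of_measure_ne_zero (μ := θ) (by rw [(hCn n).2.2.2]; exact one_ne_zero)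
  obtain ⟨C, hC, hCne, hCΩ, φ, hφ, hconv⟩ := hΩ.exists_subseq_tendsto_hausdorffDist
    (fun n => (hCn n).1.isClosed) hne fun n => (hCn n).2.2.1
  have hfin : ∀ k, hausdorffEDist (Cn (φ k)) C ≠ ⊤ := fun k =>
    hausdorffEDist_ne_top_of_nonempty_of_bounded (hne _) hCne (hCn _).1.isBounded hC.isBounded
  have hprox : IsProxRegular r C :=
    (HasProxNormalIneq.of_tendsto_hausdorffDist hΩ (fun k => (hCn (φ k)).2.2.1)
      (fun k => (hCn (φ k)).2.1.hasProxNormalIneq) hC.isClosed hCne hfin hconv).isProxRegular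
      hC.isClosed
  have hfull : ∀ᵐ x ∂θ, x ∈ C := ae_mem_of_tendsto_hausdorffDist hC.isClosed hCne hfin hconv
    fun k => (mem_ae_iff_prob_eq_one (hCn (φ k)).1.isClosed.measurableSet).2 (hCn (φ k)).2.2.2
  exact ⟨C, ⟨hC, hprox, hCΩ, (mem_ae_iff_prob_eq_one hC.isClosed.measurableSet).1 hfull⟩,
    φ, hφ, hconv⟩

/-- Lemma (compactness, in the Hausdorff distance, of the family of compact
`r`-prox-regular subsets of `Ω` of full `θ`-measure). -/
theorem stmt17 {d : ℕ} (r : ℝ) (hr : 0 < r) (Ω : Set (Rd d)) (hΩ : IsCompact Ω)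
    (θ : Measure (Rd d)) (hθ : IsProbabilityMeasure θ)
    (Cn : ℕ → Set (Rd d))
    (hCn : ∀ n, IsCompact (Cn n) ∧ IsProxRegular r (Cn n) ∧ Cn n ⊆ Ω ∧ θ (Cn n) = 1) :
    ∃ C : Set (Rd d),
      (IsCompact C ∧ IsProxRegular r C ∧ C ⊆ Ω ∧ θ C = 1) ∧
      ∃ φ : ℕ → ℕ, StrictMono φ ∧
        Tendsto (fun k => hausdorffDist (Cn (φ k)) C) atTop (𝓝 0) :=
  stmt17_general r Ω hΩ θ hθ Cn hCn
end
end
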